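/- arXiv:1910.12307 — 6 statements merged into one kernel-verified Lean document; each statement's English description precedes it below -/
import Mathlib

section
/- Let B ∈ M_m(ℂ) be invertible with B = ±Bᴴ and let A ∈ M_m(ℂ) be selfadjoint with respect to [x,y] = xᴴBy and diagonalizable. For any eigenvalue λ of A with λ ≠ conj(λ), the direct sum of the eigenspaces of A for λ and conj(λ) is a nondegenerate subspace with respect to [·,·]. -/
open Matrix

/-- The eigenspace of a matrix `A` for the scalar `lam`, as a submodule. -/
noncomputable def eigSp (m : ℕ) (A : Matrix (Fin m) (Fin m) ℂ) (lam : ℂ) :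
    Submodule ℂ (Fin m → ℂ) :=
  LinearMap.ker (A.mulVecLin - lam • LinearMap.id)

/-!
Let `S = E_λ ⊔ E_{λ̄}`. If the Gram matrix `Vᴴ B V` were singular, some nonzero `w ∈ S` would be
`B`-orthogonal to all of `S`. Since `B A = Aᴴ B`, an eigenvector for `μ` is `B`-orthogonal to every
eigenvector for `ν ≠ μ̄`, so `w` is also `B`-orthogonal to every eigenvector of `A` outside `S`.
As `A` is diagonalizable these eigenvectors span everything, hence `B w = 0` and `w = 0`.
-/

section

variable {n K : Type*} [Fintype n] [Field K] [StarRing K]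

theorem star_dotProduct_eq_zero_of_mem_span {s : Set (n → K)} {y u : n → K}
    (hs : ∀ v ∈ s, star v ⬝ᵥ y = 0) (hu : u ∈ Submodule.span K s) : star u ⬝ᵥ y = 0 := by
  induction hu using Submodule.span_induction with
  | mem v hv => exact hs v hv
  | zero => simp
  | add u v _ _ hu hv => rw [star_add, add_dotProduct, hu, hv, add_zero]
  | smul c u _ hu => rw [star_smul, smul_dotProduct, hu, smul_zero]

theorem eq_zero_of_forall_star_dotProduct_eq_zero [DecidableEq n] {y : n → K}
    (h : ∀ u, star u ⬝ᵥ y = 0) : y = 0 :=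
  funext fun i => by simpa using h (Pi.single i 1)

theorem isUnit_det_conjTranspose_mul_mul_of_nondegenerate {k : Type*} [Fintype k]
    [DecidableEq k] {V : Matrix n k K} (B : Matrix n n K) (hV : LinearIndependent K V.col)
    (h : ∀ w ∈ Submodule.span K (Set.range V.col),
      (∀ u ∈ Submodule.span K (Set.range V.col), star u ⬝ᵥ B *ᵥ w = 0) → w = 0) :
    IsUnit (Vᴴ * B * V).det := by
  rw [isUnit_iff_ne_zero]
  intro hdet
  obtain ⟨c, hc, hGc⟩ := exists_mulVec_eq_zero_iff.mpr hdet
  have hcol_mem : ∀ d, V *ᵥ d ∈ Submodule.span K (Set.range V.col) := fun d => by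
    rw [← range_mulVecLin]; exact LinearMap.mem_range_self _ d
  suffices V *ᵥ c = 0 from hc (mulVec_injective_iff.mpr hV (this.trans (mulVec_zero V).symm))
  refine h _ (hcol_mem c) fun u hu => ?_
  obtain ⟨d, rfl⟩ : ∃ d, V *ᵥ d = u := by rwa [← range_mulVecLin] at hu
  rw [star_mulVec, ← dotProduct_mulVec, mulVec_mulVec, mulVec_mulVec, hGc, dotProduct_zero]

theorem mul_eq_conjTranspose_mul_of_nonsing_inv_mul [DecidableEq n] {A B : Matrix n n K}
    (hB : IsUnit B.det) (hA : B⁻¹ * Aᴴ * B = A) : B * A = Aᴴ * B := by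
  conv_lhs => rw [← hA, ← Matrix.mul_assoc, ← Matrix.mul_assoc, mul_nonsing_inv B hB,
    Matrix.one_mul]

theorem star_dotProduct_mulVec_eq_zero_of_mulVec_eq_smul {A B : Matrix n n K}
    (hBA : B * A = Aᴴ * B) {u x : n → K} {μ ν : K} (hu : A *ᵥ u = μ • u)
    (hx : A *ᵥ x = ν • x) (hne : star μ ≠ ν) : star u ⬝ᵥ B *ᵥ x = 0 := by
  have hν : star u ⬝ᵥ B *ᵥ (A *ᵥ x) = ν * (star u ⬝ᵥ B *ᵥ x) := by
    rw [hx, mulVec_smul, dotProduct_smul, smul_eq_mul]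
  have hμ : star u ⬝ᵥ B *ᵥ (A *ᵥ x) = star μ * (star u ⬝ᵥ B *ᵥ x) := by
    rw [mulVec_mulVec, hBA, ← mulVec_mulVec, dotProduct_mulVec, ← star_mulVec, hu, star_smul,
      smul_dotProduct, smul_eq_mul]
  have : (star μ - ν) * (star u ⬝ᵥ B *ᵥ x) = 0 := by rw [sub_mul, ← hμ, ← hν, sub_self]
  exact (mul_eq_zero.mp this).resolve_left (sub_ne_zero.mpr hne)

end

theorem span_eigenvectors_eq_top_of_isDiag {n R : Type*} [Fintype n] [DecidableEq n]
    [CommRing R] {A P : Matrix n n R} (hP : IsUnit P.det) (hD : (P⁻¹ * A * P).IsDiag) :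
    Submodule.span R {v | ∃ μ : R, A *ᵥ v = μ • v} = ⊤ := by
  set D := P⁻¹ * A * P
  have hAP : A * P = P * diagonal D.diag := by
    rw [hD.diagonal_diag, ← Matrix.mul_assoc, ← Matrix.mul_assoc, mul_nonsing_inv P hP,
      Matrix.one_mul]
  have hcol : ∀ j, A *ᵥ P.col j = D j j • P.col j := fun j => by
    rw [← mulVec_single_one, mulVec_mulVec, hAP, ← mulVec_mulVec, mulVec_single_one]
    ext i
    simp [mulVec, dotProduct, diagonal, mul_comm]
  have hsurj : Function.Surjective P.mulVecLin :=
    mulVec_surjective_iff_isUnit.mpr ((isUnit_iff_isUnit_det P).mpr hP)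
  rw [eq_top_iff, ← LinearMap.range_eq_top.mpr hsurj, range_mulVecLin]
  exact Submodule.span_mono (Set.range_subset_iff.mpr fun j => ⟨D j j, hcol j⟩)

theorem mem_eigSp {m : ℕ} {A : Matrix (Fin m) (Fin m) ℂ} {lam : ℂ} {x : Fin m → ℂ} :
    x ∈ eigSp m A lam ↔ A *ᵥ x = lam • x := by
  simp [eigSp, sub_eq_zero]

theorem eq_zero_of_mem_eigSp_sup_of_orthogonal {m : ℕ} {A B : Matrix (Fin m) (Fin m) ℂ}
    (hB : IsUnit B.det) (hBA : B * A = Aᴴ * B)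
    (htop : Submodule.span ℂ {v | ∃ μ : ℂ, A *ᵥ v = μ • v} = ⊤) {lam : ℂ} {w : Fin m → ℂ}
    (hw : w ∈ eigSp m A lam ⊔ eigSp m A (star lam))
    (horth : ∀ u ∈ eigSp m A lam ⊔ eigSp m A (star lam), star u ⬝ᵥ B *ᵥ w = 0) : w = 0 := by
  have hall : ∀ u, star u ⬝ᵥ B *ᵥ w = 0 := fun u => by
    refine star_dotProduct_eq_zero_of_mem_span ?_ (htop ▸ Submodule.mem_top : u ∈ _)
    rintro v ⟨μ, hv⟩
    by_cases h₁ : star μ = lam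
    · exact horth v (Submodule.mem_sup_right (mem_eigSp.mpr (by rw [hv, ← h₁, star_star])))
    by_cases h₂ : star μ = star lam
    · exact horth v (Submodule.mem_sup_left (mem_eigSp.mpr (by rw [hv, star_injective h₂])))
    obtain ⟨w₁, hw₁, w₂, hw₂, rfl⟩ := Submodule.mem_sup.mp hw
    rw [mulVec_add, dotProduct_add,
      star_dotProduct_mulVec_eq_zero_of_mulVec_eq_smul hBA hv (mem_eigSp.mp hw₁) h₁,
      star_dotProduct_mulVec_eq_zero_of_mulVec_eq_smul hBA hv (mem_eigSp.mp hw₂) h₂, add_zero]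
  have hBw : B *ᵥ w = 0 := eq_zero_of_forall_star_dotProduct_eq_zero hall
  exact mulVec_injective_of_isUnit ((isUnit_iff_isUnit_det B).mpr hB)
    (hBw.trans (mulVec_zero B).symm)

theorem stmt3_general (m : ℕ) (B A : Matrix (Fin m) (Fin m) ℂ) (hB : IsUnit B.det)
    (hA : B⁻¹ * Aᴴ * B = A)
    (hdiag : ∃ P : Matrix (Fin m) (Fin m) ℂ, IsUnit P.det ∧ (P⁻¹ * A * P).IsDiag)
    (lam : ℂ)
    (k : ℕ) (V : Matrix (Fin m) (Fin k) ℂ)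
    (hind : LinearIndependent ℂ (fun j i => V i j : Fin k → Fin m → ℂ))
    (hspan : Submodule.span ℂ (Set.range (fun j i => V i j : Fin k → Fin m → ℂ))
      = eigSp m A lam ⊔ eigSp m A (star lam)) :
    IsUnit (Vᴴ * B * V).det := by
  obtain ⟨P, hP, hD⟩ := hdiag
  have hspan' : Submodule.span ℂ (Set.range V.col) = eigSp m A lam ⊔ eigSp m A (star lam) :=
    hspan
  refine isUnit_det_conjTranspose_mul_mul_of_nondegenerate B hind ?_
  rw [hspan']
  exact fun w hw horth => eq_zero_of_mem_eigSp_sup_of_orthogonal hB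
    (mul_eq_conjTranspose_mul_of_nonsing_inv_mul hB hA)
    (span_eigenvectors_eq_top_of_isDiag hP hD) hw horth

theorem stmt3 (m : ℕ) (B A : Matrix (Fin m) (Fin m) ℂ) (hB : IsUnit B.det)
    (hBh : B = Bᴴ ∨ B = -Bᴴ) (hA : B⁻¹ * Aᴴ * B = A)
    (hdiag : ∃ P : Matrix (Fin m) (Fin m) ℂ, IsUnit P.det ∧ (P⁻¹ * A * P).IsDiag)
    (lam : ℂ) (hlam : lam ≠ star lam)
    (heig : ∃ v : Fin m → ℂ, v ≠ 0 ∧ A.mulVec v = lam • v)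
    (k : ℕ) (V : Matrix (Fin m) (Fin k) ℂ)
    (hind : LinearIndependent ℂ (fun j i => V i j : Fin k → Fin m → ℂ))
    (hspan : Submodule.span ℂ (Set.range (fun j i => V i j : Fin k → Fin m → ℂ))
      = eigSp m A lam ⊔ eigSp m A (star lam)) :
    IsUnit (Vᴴ * B * V).det :=
  stmt3_general m B A hB hA hdiag lam k V hind hspan
end

section
/- Let B ∈ M_m(ℂ) be invertible with B = ±Bᴴ and let A ∈ M_m(ℂ) be selfadjoint with respect to [x,y] = xᴴBy and diagonalizable. For any real eigenvalue μ of A, the eigenspace of A for μ is nondegenerate with respect to [·,·]. -/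
/-! A degenerate eigenspace would contain a nonzero `v` with `B v` orthogonal, for the plain dot
product, to the whole eigenspace. Selfadjointness means `Aᴴ B = B A`, so `(A u)ᴴ B v = uᴴ B A v`
gives `(ν̄ - μ) uᴴ B v = 0` for every eigenpair `(ν, u)`; as `μ` is real, `ν̄ = μ` puts `u` in the
`μ`-eigenspace. Hence `B v` is orthogonal to every eigenvector, and these span since `A` is
diagonalizable, so `B v = 0` and `v = 0`. -/

open Matrix

section

variable {n : Type*} [Fintype n]

lemma star_dotProduct_mulVec_eq_zero_of_eigenvectors {K : Type*} [Field K] [StarRing K]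
    {A B : Matrix n n K} (hAB : Aᴴ * B = B * A) {u v : n → K} {ν μ : K} (hu : A *ᵥ u = ν • u)
    (hv : A *ᵥ v = μ • v) (hne : star ν ≠ μ) : star u ⬝ᵥ (B *ᵥ v) = 0 := by
  have key : star ν * (star u ⬝ᵥ (B *ᵥ v)) = μ * (star u ⬝ᵥ (B *ᵥ v)) :=
    calc star ν * (star u ⬝ᵥ (B *ᵥ v))
        = star (A *ᵥ u) ⬝ᵥ (B *ᵥ v) := by rw [hu, star_smul, smul_dotProduct, smul_eq_mul]
      _ = star u ⬝ᵥ ((Aᴴ * B) *ᵥ v) := by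
        rw [star_mulVec, ← dotProduct_mulVec, mulVec_mulVec]
      _ = μ * (star u ⬝ᵥ (B *ᵥ v)) := by
        rw [hAB, ← mulVec_mulVec, hv, mulVec_smul, dotProduct_smul, smul_eq_mul]
  exact (mul_eq_mul_right_iff.1 key).resolve_left hne

lemma mulVec_col_of_isDiag [DecidableEq n] {R : Type*} [CommRing R] {A P : Matrix n n R}
    (hP : IsUnit P.det) (hD : (P⁻¹ * A * P).IsDiag) (j : n) :
    A *ᵥ P.col j = (P⁻¹ * A * P) j j • P.col j := by
  set D := P⁻¹ * A * P
  have hAP : A * P = P * D := by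
    simp only [D, Matrix.mul_assoc, mul_nonsing_inv_cancel_left P (A * P) hP]
  calc A *ᵥ P.col j = P *ᵥ (D *ᵥ Pi.single j 1) := by
        rw [← mulVec_single_one, mulVec_mulVec, hAP, mulVec_mulVec]
    _ = P *ᵥ Pi.single j (D j j) := by
        conv_lhs => rw [← hD.diagonal_diag]
        rw [diagonal_mulVec_single, mul_one, diag_apply]
    _ = D j j • P.col j := by rw [mulVec_single, op_smul_eq_smul]

lemma eq_zero_of_forall_eigenvector_star_dotProduct_eq_zero [DecidableEq n] {K : Type*} [Field K]
    [StarRing K] {A P : Matrix n n K} (hP : IsUnit P.det) (hD : (P⁻¹ * A * P).IsDiag) {w : n → K}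
    (hw : ∀ (ν : K) (u : n → K), A *ᵥ u = ν • u → star u ⬝ᵥ w = 0) : w = 0 := by
  have hPw : Pᴴ *ᵥ w = 0 := funext fun j => hw _ _ (mulVec_col_of_isDiag hP hD j)
  refine eq_zero_of_mulVec_eq_zero ?_ hPw
  rw [det_conjTranspose]
  exact hP.star.ne_zero

end

lemma mem_eigSp_iff {m : ℕ} {A : Matrix (Fin m) (Fin m) ℂ} {μ : ℂ} {v : Fin m → ℂ} :
    v ∈ eigSp m A μ ↔ A *ᵥ v = μ • v := by
  simp [eigSp, sub_eq_zero]

lemma star_dotProduct_mulVec_eq_zero_of_orthogonal_eigSp {m : ℕ}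
    {A B : Matrix (Fin m) (Fin m) ℂ} (hAB : Aᴴ * B = B * A) {μ : ℂ} (hμ : μ.im = 0)
    {v : Fin m → ℂ} (hv : v ∈ eigSp m A μ)
    (horth : ∀ w ∈ eigSp m A μ, star w ⬝ᵥ (B *ᵥ v) = 0)
    {ν : ℂ} {u : Fin m → ℂ} (hu : A *ᵥ u = ν • u) : star u ⬝ᵥ (B *ᵥ v) = 0 := by
  by_cases hνμ : star ν = μ
  · have hν : ν = μ := by
      rw [← star_star ν, hνμ]
      exact Complex.conj_eq_iff_im.2 hμ
    exact horth u (mem_eigSp_iff.2 (hν ▸ hu))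
  · exact star_dotProduct_mulVec_eq_zero_of_eigenvectors hAB hu (mem_eigSp_iff.1 hv) hνμ

theorem stmt4_general (m : ℕ) (B A : Matrix (Fin m) (Fin m) ℂ) (hB : IsUnit B.det)
    (hA : B⁻¹ * Aᴴ * B = A)
    (hdiag : ∃ P : Matrix (Fin m) (Fin m) ℂ, IsUnit P.det ∧ (P⁻¹ * A * P).IsDiag)
    (mu : ℂ) (hmu : mu.im = 0)
    (k : ℕ) (V : Matrix (Fin m) (Fin k) ℂ)
    (hind : LinearIndependent ℂ (fun j i => V i j : Fin k → Fin m → ℂ))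
    (hspan : Submodule.span ℂ (Set.range (fun j i => V i j : Fin k → Fin m → ℂ))
      = eigSp m A mu) :
    IsUnit (Vᴴ * B * V).det := by
  obtain ⟨P, hP, hD⟩ := hdiag
  have hAB : Aᴴ * B = B * A := by
    conv_rhs => rw [← hA]
    rw [Matrix.mul_assoc, mul_nonsing_inv_cancel_left B (Aᴴ * B) hB]
  have hrange : LinearMap.range V.mulVecLin = eigSp m A mu := (range_mulVecLin V).trans hspan
  rw [← isUnit_iff_isUnit_det, ← mulVec_injective_iff_isUnit, ← coe_mulVecLin,
    injective_iff_map_eq_zero]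
  intro x hx
  rw [mulVecLin_apply] at hx
  have hv : V *ᵥ x ∈ eigSp m A mu := hrange ▸ LinearMap.mem_range_self V.mulVecLin x
  have horth : ∀ w ∈ eigSp m A mu, star w ⬝ᵥ (B *ᵥ (V *ᵥ x)) = 0 := by
    rw [← hrange]
    rintro _ ⟨y, rfl⟩
    rw [mulVecLin_apply, star_mulVec, ← dotProduct_mulVec, mulVec_mulVec, mulVec_mulVec, hx,
      dotProduct_zero]
  have hBv : B *ᵥ (V *ᵥ x) = 0 := eq_zero_of_forall_eigenvector_star_dotProduct_eq_zero hP hD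
    fun _ _ hu => star_dotProduct_mulVec_eq_zero_of_orthogonal_eigSp hAB hmu hv horth hu
  exact mulVec_injective_iff.2 hind
    (by rw [eq_zero_of_mulVec_eq_zero hB.ne_zero hBv, mulVec_zero])

theorem stmt4 (m : ℕ) (B A : Matrix (Fin m) (Fin m) ℂ) (hB : IsUnit B.det)
    (hBh : B = Bᴴ ∨ B = -Bᴴ) (hA : B⁻¹ * Aᴴ * B = A)
    (hdiag : ∃ P : Matrix (Fin m) (Fin m) ℂ, IsUnit P.det ∧ (P⁻¹ * A * P).IsDiag)
    (mu : ℂ) (hmu : mu.im = 0)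
    (heig : ∃ v : Fin m → ℂ, v ≠ 0 ∧ A.mulVec v = mu • v)
    (k : ℕ) (V : Matrix (Fin m) (Fin k) ℂ)
    (hind : LinearIndependent ℂ (fun j i => V i j : Fin k → Fin m → ℂ))
    (hspan : Submodule.span ℂ (Set.range (fun j i => V i j : Fin k → Fin m → ℂ))
      = eigSp m A mu) :
    IsUnit (Vᴴ * B * V).det :=
  stmt4_general m B A hB hA hdiag mu hmu k V hind hspan
end

section
/- A diagonalizable skew-Hamiltonian matrix A ∈ M_{2n}(ℂ) with no real eigenvalues is symplectically diagonalizable, i.e. there exists a symplectic matrix S (SᴴJS = J where J = [[0, I_n],[−I_n, 0]]) such that S⁻¹AS is diagonal. -/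
open Matrix

/-- The matrix `J_{2n} = [[0, I], [-I, 0]]`. -/
def Jmat (n : ℕ) : Matrix (Fin n ⊕ Fin n) (Fin n ⊕ Fin n) ℂ :=
  Matrix.fromBlocks 0 1 (-1) 0

/-!
Write `A P = P D` with `D = diagonal d`. Skew-Hamiltonicity means `Aᴴ J = J A`, so the Gram
matrix `G = Pᴴ J P` satisfies `conj (d i) * G i j = G i j * d j`, i.e. `G i j = 0` unless
`d j = conj (d i)`. As no eigenvalue is real, `G` vanishes between any two eigenvectors whose
eigenvalues lie in the same (upper or lower) half-plane. Since `G` is invertible, both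
half-planes then carry the same number `n` of eigenvalues. Listing the eigenvectors of the upper
half-plane first puts `G` in the form `[[0, B], [-Bᴴ, 0]]` with `B` invertible, and
`S = P [[1, 0], [0, B⁻¹]]` is symplectic. It still diagonalizes `A` because
`diagonal (conj d₁) * B = B * diagonal d₂`.
-/

namespace Matrix

variable {ι κ K : Type*} [Fintype ι]

theorem IsDiag.mul_eq_mul_diagonal_diag [DecidableEq ι] [Field K] {A P : Matrix ι ι K}
    (hP : IsUnit P.det) (hD : (P⁻¹ * A * P).IsDiag) :
    A * P = P * diagonal (P⁻¹ * A * P).diag := by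
  rw [hD.diagonal_diag, ← Matrix.mul_assoc, ← Matrix.mul_assoc, mul_nonsing_inv _ hP,
    Matrix.one_mul]

theorem IsDiag.diag_mem_spectrum [DecidableEq ι] [Field K] {A P : Matrix ι ι K}
    (hP : IsUnit P.det) (hD : (P⁻¹ * A * P).IsDiag) (i : ι) :
    (P⁻¹ * A * P).diag i ∈ spectrum K A := by
  lift P to (Matrix ι ι K)ˣ using (isUnit_iff_isUnit_det _).mpr hP
  have hspec := spectrum_diagonal ((P : Matrix ι ι K)⁻¹ * A * P).diag
  rw [hD.diagonal_diag, ← coe_units_inv, spectrum.units_conjugate', coe_units_inv] at hspec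
  exact hspec ▸ Set.mem_range_self i

theorem mul_submatrix_id_eq_mul_diagonal_comp {κ' : Type*} [Fintype κ] [Fintype κ']
    [DecidableEq κ] [DecidableEq κ'] [CommSemiring K] {A : Matrix ι ι K} {P : Matrix ι κ K}
    {d : κ → K} (h : A * P = P * diagonal d) (e : κ' ≃ κ) :
    A * P.submatrix id e = P.submatrix id e * diagonal (d ∘ e) := by
  ext i j
  have hij := congrFun (congrFun h i) (e j)
  rw [mul_diagonal] at hij ⊢
  simpa [mul_apply] using hij

theorem star_mul_conjTranspose_mul_mul_apply [Fintype κ] [DecidableEq κ] [CommRing K]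
    [StarRing K] {A M : Matrix ι ι K} {Q : Matrix ι κ K} {d : κ → K}
    (hAM : Aᴴ * M = M * A) (hAQ : A * Q = Q * diagonal d) (i j : κ) :
    star (d i) * (Qᴴ * M * Q) i j = (Qᴴ * M * Q) i j * d j := by
  have h : (diagonal d)ᴴ * (Qᴴ * M * Q) = Qᴴ * M * Q * diagonal d :=
    calc (diagonal d)ᴴ * (Qᴴ * M * Q) = (Q * diagonal d)ᴴ * M * Q := by
          simp only [conjTranspose_mul, Matrix.mul_assoc]
      _ = Qᴴ * (Aᴴ * M) * Q := by simp only [← hAQ, conjTranspose_mul, Matrix.mul_assoc]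
      _ = Qᴴ * M * Q * diagonal d := by simp only [hAM, ← hAQ, Matrix.mul_assoc]
  simpa [diagonal_conjTranspose, diagonal_mul, mul_diagonal] using congrFun (congrFun h i) j

theorem conjTranspose_mul_mul_apply_eq_zero [Fintype κ] [DecidableEq κ] [Field K]
    [StarRing K] {A M : Matrix ι ι K} {Q : Matrix ι κ K} {d : κ → K}
    (hAM : Aᴴ * M = M * A) (hAQ : A * Q = Q * diagonal d) {i j : κ}
    (hij : star (d i) ≠ d j) : (Qᴴ * M * Q) i j = 0 := by
  by_contra hne
  exact hij (mul_left_cancel₀ hne (by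
    rw [mul_comm, star_mul_conjTranspose_mul_mul_apply hAM hAQ]))

section FromBlocksZero

variable {m n : Type*} [Fintype m] [Fintype n] [DecidableEq m] [DecidableEq n] [Field K]
  {B : Matrix m n K} {C : Matrix n m K}

theorem mulVec_injective_of_isUnit_fromBlocks_zero (h : IsUnit (fromBlocks 0 B C 0)) :
    Function.Injective B.mulVec ∧ Function.Injective C.mulVec := by
  have hinj := mulVec_injective_iff_isUnit.mpr h
  refine ⟨fun x y hxy => ?_, fun x y hxy => ?_⟩
  · have := @hinj (Sum.elim 0 x) (Sum.elim 0 y) (by simp [fromBlocks_mulVec, hxy])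
    exact funext fun i => by simpa using congrFun this (Sum.inr i)
  · have := @hinj (Sum.elim x 0) (Sum.elim y 0) (by simp [fromBlocks_mulVec, hxy])
    exact funext fun i => by simpa using congrFun this (Sum.inl i)

theorem card_eq_of_isUnit_fromBlocks_zero (h : IsUnit (fromBlocks 0 B C 0)) :
    Fintype.card m = Fintype.card n := by
  obtain ⟨hB, hC⟩ := mulVec_injective_of_isUnit_fromBlocks_zero h
  apply le_antisymm
  · simpa using LinearMap.finrank_le_finrank_of_injective (f := C.mulVecLin) hC
  · simpa using LinearMap.finrank_le_finrank_of_injective (f := B.mulVecLin) hB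

end FromBlocksZero

theorem card_eq_card_compl_of_isUnit [DecidableEq ι] [Field K] (p : ι → Prop) [DecidablePred p]
    {M : Matrix ι ι K} (hM : IsUnit M) (h : ∀ i j, (p i ↔ p j) → M i j = 0) :
    Fintype.card {i // p i} = Fintype.card {i // ¬ p i} := by
  set e := Equiv.sumCompl p
  have hblocks : M.submatrix e e
      = fromBlocks 0 (M.submatrix e e).toBlocks₁₂ (M.submatrix e e).toBlocks₂₁ 0 := by
    ext (i | i) (j | j)
    · exact h _ _ (iff_of_true i.2 j.2)
    · rfl
    · rfl
    · exact h _ _ (iff_of_false i.2 j.2)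
  apply card_eq_of_isUnit_fromBlocks_zero (K := K)
  rw [← hblocks, isUnit_iff_isUnit_det, det_submatrix_equiv_self]
  exact (isUnit_iff_isUnit_det M).mp hM

theorem diagonal_sum_elim_mul_fromBlocks_inv {m n : Type*} [Fintype m] [Fintype n]
    [DecidableEq m] [DecidableEq n] [Field K] {a : m → K} {b c : n → K} {B : Matrix n n K}
    (hB : IsUnit B.det) (hBbc : diagonal c * B = B * diagonal b) :
    diagonal (Sum.elim a b) * fromBlocks 1 0 0 B⁻¹
      = fromBlocks 1 0 0 B⁻¹ * diagonal (Sum.elim a c) := by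
  have hBinv : diagonal b * B⁻¹ = B⁻¹ * diagonal c :=
    calc diagonal b * B⁻¹ = B⁻¹ * (B * diagonal b) * B⁻¹ := by
          rw [nonsing_inv_mul_cancel_left _ _ hB]
      _ = B⁻¹ * diagonal c := by
          rw [← hBbc, ← Matrix.mul_assoc, mul_nonsing_inv_cancel_right _ _ hB]
  rw [← fromBlocks_diagonal, ← fromBlocks_diagonal, fromBlocks_multiply, fromBlocks_multiply]
  simp [hBinv]

end Matrix

theorem Complex.star_ne_of_im_pos_iff {z w : ℂ} (hz : z.im ≠ 0) (h : 0 < z.im ↔ 0 < w.im) :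
    star z ≠ w := by
  rintro rfl
  simp only [Complex.star_def, Complex.conj_im, Left.neg_pos_iff] at h
  rcases hz.lt_or_gt with hz | hz
  · exact hz.not_gt (h.mpr hz)
  · exact (h.mp hz).not_gt hz

theorem exists_equiv_sum_im_pos_im_neg {ι : Type*} [Fintype ι] [DecidableEq ι] {n : ℕ}
    (hι : Fintype.card ι = n + n) {d : ι → ℂ} (hd : ∀ i, (d i).im ≠ 0)
    {G : Matrix ι ι ℂ} (hG : IsUnit G) (hGd : ∀ i j, star (d i) ≠ d j → G i j = 0) :
    ∃ e : Fin n ⊕ Fin n ≃ ι,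
      (∀ a, 0 < (d (e (.inl a))).im) ∧ ∀ b, (d (e (.inr b))).im < 0 := by
  have hcard := card_eq_card_compl_of_isUnit (fun i => 0 < (d i).im) hG
    fun i j hij => hGd i j (Complex.star_ne_of_im_pos_iff (hd i) hij)
  have hsum := Fintype.card_congr (Equiv.sumCompl fun i => 0 < (d i).im)
  rw [Fintype.card_sum, hι] at hsum
  obtain ⟨e₁⟩ : Nonempty (Fin n ≃ {i // 0 < (d i).im}) :=
    ⟨(Fintype.equivFinOfCardEq (by omega)).symm⟩
  obtain ⟨e₂⟩ : Nonempty (Fin n ≃ {i // ¬ 0 < (d i).im}) :=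
    ⟨(Fintype.equivFinOfCardEq (by omega)).symm⟩
  exact ⟨(e₁.sumCongr e₂).trans (Equiv.sumCompl _), fun a => (e₁ a).prop,
    fun b => lt_of_le_of_ne (not_lt.mp (e₂ b).prop) (hd _)⟩

theorem Jmat_conjTranspose (n : ℕ) : (Jmat n)ᴴ = -Jmat n := by
  rw [Jmat, fromBlocks_conjTranspose, fromBlocks_neg]
  simp

theorem Jmat_mul_transpose (n : ℕ) : Jmat n * (Jmat n)ᵀ = 1 := by
  rw [Jmat, fromBlocks_transpose, fromBlocks_multiply, ← fromBlocks_one]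
  simp

theorem isUnit_Jmat (n : ℕ) : IsUnit (Jmat n) :=
  (isUnit_iff_isUnit_det _).mpr (isUnit_det_of_right_inverse (Jmat_mul_transpose n))

theorem conjTranspose_mul_Jmat_eq_Jmat_mul {n : ℕ}
    {A : Matrix (Fin n ⊕ Fin n) (Fin n ⊕ Fin n) ℂ} (hA : (Jmat n)ᵀ * Aᴴ * Jmat n = A) :
    Aᴴ * Jmat n = Jmat n * A := by
  conv_rhs => rw [← hA]
  rw [← Matrix.mul_assoc, ← Matrix.mul_assoc, Jmat_mul_transpose, Matrix.one_mul]

theorem conjTranspose_mul_Jmat_mul_eq_fromBlocks {n : ℕ}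
    {A Q : Matrix (Fin n ⊕ Fin n) (Fin n ⊕ Fin n) ℂ} {a b : Fin n → ℂ}
    (hAJ : Aᴴ * Jmat n = Jmat n * A) (hAQ : A * Q = Q * diagonal (Sum.elim a b))
    (ha : ∀ i, 0 < (a i).im) (hb : ∀ j, (b j).im < 0) :
    Qᴴ * Jmat n * Q = fromBlocks 0 (Qᴴ * Jmat n * Q).toBlocks₁₂
      (-(Qᴴ * Jmat n * Q).toBlocks₁₂ᴴ) 0 := by
  have hskew : (Qᴴ * Jmat n * Q)ᴴ = -(Qᴴ * Jmat n * Q) := by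
    simp only [conjTranspose_mul, conjTranspose_conjTranspose, Jmat_conjTranspose,
      Matrix.mul_assoc, Matrix.mul_neg, Matrix.neg_mul]
  ext (i | i) (j | j)
  · exact conjTranspose_mul_mul_apply_eq_zero hAJ hAQ
      (Complex.star_ne_of_im_pos_iff (ha i).ne' (iff_of_true (ha i) (ha j)))
  · rfl
  · have h := congrFun (congrFun hskew (.inr i)) (.inl j)
    simp only [conjTranspose_apply] at h
    simp [toBlocks₁₂, h]
  · exact conjTranspose_mul_mul_apply_eq_zero hAJ hAQ
      (Complex.star_ne_of_im_pos_iff (hb i).ne (iff_of_false (hb i).not_gt (hb j).not_gt))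

theorem conjTranspose_mul_Jmat_mul_fromBlocks_inv {n : ℕ}
    {Q : Matrix (Fin n ⊕ Fin n) (Fin n ⊕ Fin n) ℂ} {B : Matrix (Fin n) (Fin n) ℂ}
    (hB : IsUnit B.det) (hQ : Qᴴ * Jmat n * Q = fromBlocks 0 B (-Bᴴ) 0) :
    (Q * fromBlocks 1 0 0 B⁻¹)ᴴ * Jmat n * (Q * fromBlocks 1 0 0 B⁻¹) = Jmat n := by
  have hBB : B * B⁻¹ = 1 := mul_nonsing_inv _ hB
  have hBH : (B⁻¹)ᴴ * Bᴴ = 1 := by rw [← conjTranspose_mul, hBB, conjTranspose_one]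
  calc (Q * fromBlocks 1 0 0 B⁻¹)ᴴ * Jmat n * (Q * fromBlocks 1 0 0 B⁻¹)
      = (fromBlocks 1 0 0 B⁻¹)ᴴ * (Qᴴ * Jmat n * Q) * fromBlocks 1 0 0 B⁻¹ := by
        simp only [conjTranspose_mul, Matrix.mul_assoc]
    _ = Jmat n := by
        rw [hQ, fromBlocks_conjTranspose, fromBlocks_multiply, fromBlocks_multiply, Jmat]
        simp [hBB, hBH]

theorem exists_symplectic_isDiag_of_im_pos_im_neg {n : ℕ}
    {A Q : Matrix (Fin n ⊕ Fin n) (Fin n ⊕ Fin n) ℂ} {a b : Fin n → ℂ}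
    (hAJ : Aᴴ * Jmat n = Jmat n * A) (hQ : IsUnit Q.det)
    (hAQ : A * Q = Q * diagonal (Sum.elim a b))
    (ha : ∀ i, 0 < (a i).im) (hb : ∀ j, (b j).im < 0) :
    ∃ S : Matrix (Fin n ⊕ Fin n) (Fin n ⊕ Fin n) ℂ,
      Sᴴ * Jmat n * S = Jmat n ∧ (S⁻¹ * A * S).IsDiag := by
  set B := (Qᴴ * Jmat n * Q).toBlocks₁₂
  have hG := conjTranspose_mul_Jmat_mul_eq_fromBlocks hAJ hAQ ha hb
  have hB : IsUnit B.det := by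
    have hQu := (isUnit_iff_isUnit_det Q).mpr hQ
    have hGu : IsUnit (Qᴴ * Jmat n * Q) := (hQu.star.mul (isUnit_Jmat n)).mul hQu
    rw [hG] at hGu
    exact (isUnit_iff_isUnit_det B).mp
      (mulVec_injective_iff_isUnit.mp (mulVec_injective_of_isUnit_fromBlocks_zero hGu).1)
  have hBab : diagonal (star a) * B = B * diagonal b := by
    ext i j
    simpa [B, toBlocks₁₂, diagonal_mul, mul_diagonal] using
      star_mul_conjTranspose_mul_mul_apply hAJ hAQ (.inl i) (.inr j)
  set S := Q * fromBlocks 1 0 0 B⁻¹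
  have hS : IsUnit S.det := by
    rw [det_mul, det_fromBlocks_zero₂₁, det_one, one_mul]
    exact hQ.mul (isUnit_nonsing_inv_det _ hB)
  have hAS : A * S = S * diagonal (Sum.elim a (star a)) := by
    rw [← Matrix.mul_assoc, hAQ, Matrix.mul_assoc, diagonal_sum_elim_mul_fromBlocks_inv hB hBab,
      ← Matrix.mul_assoc]
  refine ⟨S, conjTranspose_mul_Jmat_mul_fromBlocks_inv hB hG, ?_⟩
  rw [Matrix.mul_assoc, hAS, ← Matrix.mul_assoc, nonsing_inv_mul _ hS, Matrix.one_mul]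
  exact isDiag_diagonal _

theorem stmt5 (n : ℕ) (A : Matrix (Fin n ⊕ Fin n) (Fin n ⊕ Fin n) ℂ)
    (hstruct : (Jmat n)ᵀ * Aᴴ * Jmat n = A)
    (hdiag : ∃ P : Matrix (Fin n ⊕ Fin n) (Fin n ⊕ Fin n) ℂ,
      IsUnit P.det ∧ (P⁻¹ * A * P).IsDiag)
    (hspec : ∀ μ ∈ spectrum ℂ A, μ.im ≠ 0) :
    ∃ S : Matrix (Fin n ⊕ Fin n) (Fin n ⊕ Fin n) ℂ,
      Sᴴ * Jmat n * S = Jmat n ∧ (S⁻¹ * A * S).IsDiag := by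
  obtain ⟨P, hP, hD⟩ := hdiag
  have hAJ := conjTranspose_mul_Jmat_eq_Jmat_mul hstruct
  have hAP := hD.mul_eq_mul_diagonal_diag hP
  have hPu : IsUnit P := (isUnit_iff_isUnit_det P).mpr hP
  obtain ⟨e, hpos, hneg⟩ := exists_equiv_sum_im_pos_im_neg (n := n) (by simp)
    (fun i => hspec _ (hD.diag_mem_spectrum hP i)) ((hPu.star.mul (isUnit_Jmat n)).mul hPu)
    fun i j => conjTranspose_mul_mul_apply_eq_zero hAJ hAP
  have hAQ := mul_submatrix_id_eq_mul_diagonal_comp hAP e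
  rw [← Sum.elim_comp_inl_inr (_ ∘ e)] at hAQ
  refine exists_symplectic_isDiag_of_im_pos_im_neg hAJ ?_ hAQ hpos hneg
  rw [det_permute']
  exact ((Equiv.Perm.sign e).isUnit.map (Int.castRingHom ℂ)).mul hP
end

section
/- A diagonalizable Hamiltonian matrix A ∈ M_{2n}(ℂ) with no purely imaginary eigenvalues (in particular 0 is not an eigenvalue) is symplectically diagonalizable, i.e. there exists a symplectic matrix S with S⁻¹AS diagonal. -/
open Matrix

/-!
Write `A P = P D` with `D = diagonal d` and `P` invertible. The Hamiltonian identity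
`Aᴴ J + J A = 0` becomes `Dᴴ M + M D = 0` for the invertible skew-Hermitian matrix `M = Pᴴ J P`,
that is `(conj dᵢ + dⱼ) Mᵢⱼ = 0`; so `Mᵢⱼ = 0` unless `Re dᵢ` and `Re dⱼ` have opposite signs.
Since `M` is invertible, its two vanishing diagonal blocks force exactly `n` of the `dᵢ` into each
open half plane. Ordering the columns of `P` by sign gives `M = [[0, B], [-Bᴴ, 0]]` with `B`
invertible, and `S = P · diag(1, B⁻¹)` satisfies `Sᴴ J S = J`, while
`S⁻¹ A S = diag(D₁, B D₂ B⁻¹)` is still diagonal because `B D₂ = -conj D₁ · B`.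
-/

namespace Matrix

variable {R : Type*} [CommRing R]

section Blocks

variable {m m' : Type*}

theorem eq_fromBlocks_of_conjTranspose_eq_neg [StarRing R] {M : Matrix (m ⊕ m') (m ⊕ m') R}
    (hM : Mᴴ = -M) (h₁₁ : M.toBlocks₁₁ = 0) (h₂₂ : M.toBlocks₂₂ = 0) :
    M = fromBlocks 0 M.toBlocks₁₂ (-M.toBlocks₁₂ᴴ) 0 := by
  have h₂₁ : M.toBlocks₂₁ = -M.toBlocks₁₂ᴴ := by
    ext i j
    simpa [toBlocks₂₁, toBlocks₁₂, conjTranspose_apply, eq_neg_iff_add_eq_zero, add_comm] using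
      congrFun (congrFun hM (Sum.inr i)) (Sum.inl j)
  conv_lhs => rw [← fromBlocks_toBlocks M, h₁₁, h₂₂, h₂₁]

variable [Fintype m] [DecidableEq m] [Fintype m'] [DecidableEq m']

theorem toBlocks₁₂_mul_inv_toBlocks₂₁ {M : Matrix (m ⊕ m') (m ⊕ m') R} (hM : IsUnit M.det)
    (h : M.toBlocks₁₁ = 0) : M.toBlocks₁₂ * M⁻¹.toBlocks₂₁ = 1 := by
  have := congrArg toBlocks₁₁ (mul_nonsing_inv M hM)
  generalize M⁻¹ = N at this ⊢
  rw [← fromBlocks_toBlocks M, ← fromBlocks_toBlocks N, fromBlocks_multiply] at this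
  simpa [h, ← fromBlocks_one] using this

theorem inv_toBlocks₂₁_mul_toBlocks₁₂ {M : Matrix (m ⊕ m') (m ⊕ m') R} (hM : IsUnit M.det)
    (h : M.toBlocks₂₂ = 0) : M⁻¹.toBlocks₂₁ * M.toBlocks₁₂ = 1 := by
  have := congrArg toBlocks₂₂ (nonsing_inv_mul M hM)
  generalize M⁻¹ = N at this ⊢
  rw [← fromBlocks_toBlocks M, ← fromBlocks_toBlocks N, fromBlocks_multiply] at this
  simpa [h, ← fromBlocks_one] using this

theorem card_eq_of_toBlocks₁₁_eq_zero_of_toBlocks₂₂_eq_zero [Nontrivial R]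
    {M : Matrix (m ⊕ m') (m ⊕ m') R} (hM : IsUnit M.det) (h₁₁ : M.toBlocks₁₁ = 0)
    (h₂₂ : M.toBlocks₂₂ = 0) : Fintype.card m = Fintype.card m' :=
  square_of_invertible _ _ (toBlocks₁₂_mul_inv_toBlocks₂₁ hM h₁₁)
    (inv_toBlocks₂₁_mul_toBlocks₁₂ hM h₂₂)

theorem conjTranspose_fromBlocks_mul_antidiagonal_mul [StarRing R] {B C : Matrix m m R}
    (hBC : B * C = 1) :
    (fromBlocks 1 0 0 C)ᴴ * fromBlocks 0 B (-Bᴴ) 0 * fromBlocks 1 0 0 C =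
      fromBlocks 0 1 (-1) 0 := by
  simp [fromBlocks_conjTranspose, fromBlocks_multiply, hBC, ← conjTranspose_mul]

theorem isDiag_fromBlocks_mul_diagonal_mul {B C : Matrix m m R} {d₁ d₂ e : m → R}
    (hBC : B * C = 1) (hB : B * diagonal d₂ = diagonal e * B) :
    (fromBlocks 1 0 0 B * diagonal (Sum.elim d₁ d₂) * fromBlocks 1 0 0 C).IsDiag := by
  rw [← fromBlocks_diagonal, fromBlocks_multiply, fromBlocks_multiply]
  simp only [Matrix.one_mul, Matrix.mul_one, Matrix.zero_mul, Matrix.mul_zero, add_zero,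
    zero_add]
  rw [hB, Matrix.mul_assoc, hBC, Matrix.mul_one]
  exact (isDiag_diagonal d₁).fromBlocks (isDiag_diagonal e)

end Blocks

variable {ι : Type*} [Fintype ι] [DecidableEq ι]

theorem isUnit_det_conjTranspose_mul_mul [StarRing R] {P J : Matrix ι ι R} (hP : IsUnit P.det)
    (hJ : IsUnit J.det) : IsUnit (Pᴴ * J * P).det := by
  rw [det_mul, det_mul, det_conjTranspose]
  exact (hP.star.mul hJ).mul hP

theorem mul_submatrix_eq_of_mul_eq_mul_diagonal {κ : Type*} [Fintype κ] [DecidableEq κ]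
    {A P : Matrix ι ι R} {d : ι → R} (hAP : A * P = P * diagonal d) (σ : κ ≃ ι) :
    A * P.submatrix id σ = P.submatrix id σ * diagonal (d ∘ σ) := by
  ext i j
  have := congrFun (congrFun hAP i) (σ j)
  rw [mul_diagonal] at this ⊢
  simpa [mul_apply] using this

theorem conjTranspose_diagonal_mul_add_mul_diagonal [StarRing R] {A P J : Matrix ι ι R}
    {d : ι → R} (hA : Aᴴ * J + J * A = 0) (hAP : A * P = P * diagonal d) :
    (diagonal d)ᴴ * (Pᴴ * J * P) + Pᴴ * J * P * diagonal d = 0 := by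
  have hPA : (diagonal d)ᴴ * Pᴴ = Pᴴ * Aᴴ := by
    rw [← conjTranspose_mul, ← hAP, conjTranspose_mul]
  calc (diagonal d)ᴴ * (Pᴴ * J * P) + Pᴴ * J * P * diagonal d
      = Pᴴ * (Aᴴ * J + J * A) * P := by
        rw [Matrix.mul_assoc _ P, ← hAP, ← Matrix.mul_assoc, ← Matrix.mul_assoc, hPA]
        simp only [Matrix.mul_add, Matrix.add_mul, Matrix.mul_assoc]
    _ = 0 := by rw [hA, Matrix.mul_zero, Matrix.zero_mul]

theorem star_add_mul_apply_eq_zero [StarRing R] {M : Matrix ι ι R} {d : ι → R}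
    (h : (diagonal d)ᴴ * M + M * diagonal d = 0) (i j : ι) :
    (star (d i) + d j) * M i j = 0 := by
  have := congrFun (congrFun h i) j
  rw [Matrix.add_apply, diagonal_conjTranspose, diagonal_mul, mul_diagonal, Pi.star_apply] at this
  rw [← zero_apply i j, ← this]
  ring

theorem apply_eq_zero_of_re_add_ne_zero {M : Matrix ι ι ℂ} {d : ι → ℂ}
    (h : (diagonal d)ᴴ * M + M * diagonal d = 0) {i j : ι} (hij : (d i).re + (d j).re ≠ 0) :
    M i j = 0 := by
  refine (mul_eq_zero.mp (star_add_mul_apply_eq_zero h i j)).resolve_left fun h0 => hij ?_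
  simpa using congrArg Complex.re h0

theorem card_re_pos_eq_card_not_re_pos {M : Matrix ι ι ℂ} {d : ι → ℂ} (hM : IsUnit M.det)
    (h : (diagonal d)ᴴ * M + M * diagonal d = 0) (hd : ∀ i, (d i).re ≠ 0) :
    Fintype.card {i // 0 < (d i).re} = Fintype.card {i // ¬ 0 < (d i).re} := by
  set σ := Equiv.sumCompl fun i => 0 < (d i).re
  refine card_eq_of_toBlocks₁₁_eq_zero_of_toBlocks₂₂_eq_zero (M := M.submatrix σ σ)
    (by rwa [det_submatrix_equiv_self]) ?_ ?_
  · ext i j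
    exact apply_eq_zero_of_re_add_ne_zero h (add_pos i.2 j.2).ne'
  · ext i j
    have hneg (k : {i // ¬ 0 < (d i).re}) : (d k).re < 0 := (not_lt.mp k.2).lt_of_ne (hd k)
    exact apply_eq_zero_of_re_add_ne_zero h (add_neg (hneg i) (hneg j)).ne

theorem mem_spectrum_of_mul_eq_mul_diagonal {A P : Matrix ι ι ℂ} {d : ι → ℂ} (hP : IsUnit P.det)
    (hAP : A * P = P * diagonal d) (i : ι) : d i ∈ spectrum ℂ A := by
  lift P to (Matrix ι ι ℂ)ˣ using (isUnit_iff_isUnit_det P).mpr hP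
  have : (↑P⁻¹ : Matrix ι ι ℂ) * A * P = diagonal d := by
    rw [Matrix.mul_assoc, hAP, ← Matrix.mul_assoc, Units.inv_mul, Matrix.one_mul]
  rw [← spectrum.units_conjugate' (u := P), this, spectrum_diagonal]
  exact ⟨i, rfl⟩

end Matrix

theorem exists_equiv_sum_of_card_eq {ι : Type*} [Fintype ι] (p : ι → Prop) [DecidablePred p]
    {n : ℕ} (hι : Fintype.card ι = n + n)
    (h : Fintype.card {i // p i} = Fintype.card {i // ¬ p i}) :
    ∃ σ : Fin n ⊕ Fin n ≃ ι, ∀ i, p (σ (.inl i)) ∧ ¬ p (σ (.inr i)) := by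
  have hsum : Fintype.card {i // p i} + Fintype.card {i // ¬ p i} = n + n := by
    rw [← hι, ← Fintype.card_sum, Fintype.card_congr (Equiv.sumCompl p)]
  have e₁ : {i // p i} ≃ Fin n := Fintype.equivFinOfCardEq (by omega)
  have e₂ : {i // ¬ p i} ≃ Fin n := Fintype.equivFinOfCardEq (by omega)
  exact ⟨(Equiv.sumCongr e₁.symm e₂.symm).trans (Equiv.sumCompl p),
    fun i => ⟨by simpa using (e₁.symm i).2, by simpa using (e₂.symm i).2⟩⟩

theorem Jmat_transpose (n : ℕ) : (Jmat n)ᵀ = -Jmat n := by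
  simp [Jmat, fromBlocks_transpose, fromBlocks_neg]

theorem Jmat_mul_Jmat (n : ℕ) : Jmat n * Jmat n = -1 := by
  simp [Jmat, fromBlocks_multiply, fromBlocks_neg, ← fromBlocks_one]

theorem isUnit_det_Jmat (n : ℕ) : IsUnit (Jmat n).det :=
  isUnit_det_of_right_inverse (B := -Jmat n) (by rw [Matrix.mul_neg, Jmat_mul_Jmat, neg_neg])

theorem conjTranspose_mul_Jmat_add_Jmat_mul_eq_zero {n : ℕ}
    {A : Matrix (Fin n ⊕ Fin n) (Fin n ⊕ Fin n) ℂ} (hA : (Jmat n)ᵀ * Aᴴ * Jmat n = -A) :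
    Aᴴ * Jmat n + Jmat n * A = 0 := by
  rw [Jmat_transpose, Matrix.neg_mul, Matrix.neg_mul, neg_inj] at hA
  nth_rewrite 2 [← hA]
  rw [← Matrix.mul_assoc, ← Matrix.mul_assoc, Jmat_mul_Jmat, neg_one_mul, Matrix.neg_mul,
    add_neg_cancel]

theorem exists_symplectic_isDiag_of_re_pos_of_re_neg {n : ℕ}
    {A P : Matrix (Fin n ⊕ Fin n) (Fin n ⊕ Fin n) ℂ} {d₁ d₂ : Fin n → ℂ}
    (hA : Aᴴ * Jmat n + Jmat n * A = 0) (hP : IsUnit P.det)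
    (hAP : A * P = P * diagonal (Sum.elim d₁ d₂))
    (hd₁ : ∀ i, 0 < (d₁ i).re) (hd₂ : ∀ i, (d₂ i).re < 0) :
    ∃ S, Sᴴ * Jmat n * S = Jmat n ∧ (S⁻¹ * A * S).IsDiag := by
  set M := Pᴴ * Jmat n * P
  have hM := conjTranspose_diagonal_mul_add_mul_diagonal hA hAP
  have hMH : Mᴴ = -M := by
    simp [M, conjTranspose_mul, Jmat_conjTranspose, Matrix.mul_assoc]
  have hMdet : IsUnit M.det := isUnit_det_conjTranspose_mul_mul hP (isUnit_det_Jmat n)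
  have h₁₁ : M.toBlocks₁₁ = 0 := by
    ext i j
    exact apply_eq_zero_of_re_add_ne_zero hM (add_pos (hd₁ i) (hd₁ j)).ne'
  have h₂₂ : M.toBlocks₂₂ = 0 := by
    ext i j
    exact apply_eq_zero_of_re_add_ne_zero hM (add_neg (hd₂ i) (hd₂ j)).ne
  set B := M.toBlocks₁₂
  set C := M⁻¹.toBlocks₂₁
  have hBC : B * C = 1 := toBlocks₁₂_mul_inv_toBlocks₂₁ hMdet h₁₁
  have hB : B * diagonal d₂ = diagonal (fun i => -star (d₁ i)) * B := by
    ext i j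
    have := star_add_mul_apply_eq_zero hM (.inl i) (.inr j)
    simp only [B, M, toBlocks₁₂, of_apply, mul_diagonal, diagonal_mul, Sum.elim_inl,
      Sum.elim_inr] at this ⊢
    linear_combination this
  set Q : Matrix (Fin n ⊕ Fin n) (Fin n ⊕ Fin n) ℂ := fromBlocks 1 0 0 C
  have hQ : Q⁻¹ = fromBlocks 1 0 0 B :=
    inv_eq_left_inv (by simp [Q, fromBlocks_multiply, hBC, fromBlocks_one])
  refine ⟨P * Q, ?_, ?_⟩
  · calc (P * Q)ᴴ * Jmat n * (P * Q) = Qᴴ * M * Q := by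
          simp only [M, conjTranspose_mul, Matrix.mul_assoc]
      _ = Jmat n := by
          rw [eq_fromBlocks_of_conjTranspose_eq_neg hMH h₁₁ h₂₂]
          exact conjTranspose_fromBlocks_mul_antidiagonal_mul hBC
  · have hPAP : P⁻¹ * A * P = diagonal (Sum.elim d₁ d₂) := by
      rw [Matrix.mul_assoc, hAP, nonsing_inv_mul_cancel_left P _ hP]
    rw [Matrix.mul_inv_rev, hQ, show fromBlocks 1 0 0 B * P⁻¹ * A * (P * Q) =
      fromBlocks 1 0 0 B * (P⁻¹ * A * P) * Q by simp only [Matrix.mul_assoc], hPAP]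
    exact isDiag_fromBlocks_mul_diagonal_mul hBC hB

theorem stmt6 (n : ℕ) (A : Matrix (Fin n ⊕ Fin n) (Fin n ⊕ Fin n) ℂ)
    (hstruct : (Jmat n)ᵀ * Aᴴ * Jmat n = -A)
    (hdiag : ∃ P : Matrix (Fin n ⊕ Fin n) (Fin n ⊕ Fin n) ℂ,
      IsUnit P.det ∧ (P⁻¹ * A * P).IsDiag)
    (hspec : ∀ μ ∈ spectrum ℂ A, μ.re ≠ 0) :
    ∃ S : Matrix (Fin n ⊕ Fin n) (Fin n ⊕ Fin n) ℂ,
      Sᴴ * Jmat n * S = Jmat n ∧ (S⁻¹ * A * S).IsDiag := by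
  obtain ⟨P, hP, hPA⟩ := hdiag
  set d := (P⁻¹ * A * P).diag
  have hAP : A * P = P * diagonal d := by
    rw [hPA.diagonal_diag, ← Matrix.mul_assoc, ← Matrix.mul_assoc, mul_nonsing_inv _ hP,
      Matrix.one_mul]
  have hd (i) : (d i).re ≠ 0 := hspec _ (mem_spectrum_of_mul_eq_mul_diagonal hP hAP i)
  have hA := conjTranspose_mul_Jmat_add_Jmat_mul_eq_zero hstruct
  obtain ⟨σ, hσ⟩ := exists_equiv_sum_of_card_eq (n := n) (fun i => 0 < (d i).re) (by simp)
    (card_re_pos_eq_card_not_re_pos (isUnit_det_conjTranspose_mul_mul hP (isUnit_det_Jmat n))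
      (conjTranspose_diagonal_mul_add_mul_diagonal hA hAP) hd)
  refine exists_symplectic_isDiag_of_re_pos_of_re_neg (P := P.submatrix id σ)
    (d₁ := d ∘ σ ∘ .inl) (d₂ := d ∘ σ ∘ .inr) hA ?_ ?_ (fun i => (hσ i).1)
    (fun i => (not_lt.mp (hσ i).2).lt_of_ne (hd _))
  · rw [det_permute']
    exact ((Equiv.Perm.sign σ).isUnit.map (Int.castRingHom ℂ)).mul hP
  · rw [← Function.comp_assoc, ← Function.comp_assoc, Sum.elim_comp_inl_inr]
    exact mul_submatrix_eq_of_mul_eq_mul_diagonal hAP σ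
end

section
/- A diagonalizable perskew-Hermitian matrix A ∈ M_{2n}(ℂ) with no purely imaginary eigenvalues is perplectically diagonalizable. -/
/-!
Conjugating by an eigenbasis `Q` turns `A` into a diagonal matrix `D` that is skew-adjoint for the
Hermitian form `G = Qᴴ R Q`. Eigenvectors for eigenvalues `μ`, `ν` can pair nontrivially under
such a form only if `ν = -conj μ`; since no eigenvalue is purely imaginary, every eigenvector is
isotropic. Hence a coordinate vector `eᵢ` pairs with some `eⱼ`, `j ≠ i`, giving a hyperbolic pair
of eigenvectors. Projecting the remaining coordinate vectors away from this pair keeps them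
eigenvectors and leaves a nondegenerate form on two fewer coordinates, so induction produces a
basis of eigenvectors in which the form is `R`.
-/

open Matrix

def Rrev (n : ℕ) : Matrix (Fin n) (Fin n) ℂ :=
  Matrix.of fun i j => if j = i.rev then 1 else 0

def R2 (n : ℕ) : Matrix (Fin n ⊕ Fin n) (Fin n ⊕ Fin n) ℂ :=
  Matrix.fromBlocks 0 (Rrev n) (Rrev n) 0

lemma Rrev_apply (n : ℕ) (i j : Fin n) : Rrev n i j = if i = j.rev then 1 else 0 := by
  simp only [Rrev, of_apply, eq_comm (a := j), Fin.rev_eq_iff]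

lemma Rrev_mul_self (n : ℕ) : Rrev n * Rrev n = 1 := by
  ext i j
  simp [Matrix.mul_apply, Rrev_apply, Matrix.one_apply]

lemma conjTranspose_Rrev (n : ℕ) : (Rrev n)ᴴ = Rrev n := by
  ext i j
  rw [conjTranspose_apply, Rrev_apply, Rrev, of_apply]
  simp

lemma R2_mul_self (n : ℕ) : R2 n * R2 n = 1 := by
  simp [R2, fromBlocks_multiply, Rrev_mul_self]

lemma conjTranspose_R2 (n : ℕ) : (R2 n)ᴴ = R2 n := by
  simp [R2, fromBlocks_conjTranspose, conjTranspose_Rrev]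

lemma det_R2_ne_zero (n : ℕ) : (R2 n).det ≠ 0 :=
  (isUnit_det_of_right_inverse (R2_mul_self n)).ne_zero

lemma R2_inl_inr (n : ℕ) (i j : Fin n) : R2 n (.inl i) (.inr j) = if i = j.rev then 1 else 0 := by
  simp [R2, Rrev_apply]

lemma R2_inr_inl (n : ℕ) (i j : Fin n) : R2 n (.inr i) (.inl j) = if i = j.rev then 1 else 0 := by
  simp [R2, Rrev_apply]

section SkewAdjoint

variable {ι κ : Type*} [Fintype ι] [Fintype κ]

def IsSkewAdjointWrt (G D : Matrix ι ι ℂ) : Prop := Dᴴ * G + G * D = 0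

lemma star_mulVec_dotProduct_mulVec (G : Matrix ι ι ℂ) (W : Matrix ι κ ℂ) (x y : κ → ℂ) :
    star (W *ᵥ x) ⬝ᵥ G *ᵥ (W *ᵥ y) = star x ⬝ᵥ (Wᴴ * G * W) *ᵥ y := by
  rw [star_mulVec, ← dotProduct_mulVec, mulVec_mulVec, mulVec_mulVec, Matrix.mul_assoc]

lemma star_dotProduct_mulVec_swap {G : Matrix ι ι ℂ} (hG : Gᴴ = G) (x y : ι → ℂ) :
    star y ⬝ᵥ G *ᵥ x = star (star x ⬝ᵥ G *ᵥ y) := by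
  rw [star_dotProduct, star_mulVec, ← dotProduct_mulVec, hG]

lemma conjTranspose_mul_mul_apply [DecidableEq κ] (G : Matrix ι ι ℂ) (W : Matrix ι κ ℂ)
    (k l : κ) : (Wᴴ * G * W) k l = star (W.col k) ⬝ᵥ G *ᵥ W.col l := by
  rw [← mulVec_single_one, ← mulVec_single_one, star_mulVec_dotProduct_mulVec]
  simp

lemma mul_eq_mul_diagonal_of_col [DecidableEq κ] {D : Matrix ι ι ℂ} {W : Matrix ι κ ℂ} {μ : κ → ℂ}
    (h : ∀ k, D *ᵥ W.col k = μ k • W.col k) : D * W = W * diagonal μ := by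
  ext i k
  simpa [mulVec, dotProduct, mul_apply, mul_comm, diagonal_apply] using congrFun (h k) i

namespace IsSkewAdjointWrt

variable {G D : Matrix ι ι ℂ}

lemma congr (h : IsSkewAdjointWrt G D) {W : Matrix ι κ ℂ} {D' : Matrix κ κ ℂ}
    (hW : D * W = W * D') : IsSkewAdjointWrt (Wᴴ * G * W) D' := by
  have hW' : D'ᴴ * Wᴴ = Wᴴ * Dᴴ := by rw [← conjTranspose_mul, ← hW, conjTranspose_mul]
  calc D'ᴴ * (Wᴴ * G * W) + Wᴴ * G * W * D' = Wᴴ * (Dᴴ * G + G * D) * W := by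
        rw [Matrix.mul_assoc _ W, ← hW, ← Matrix.mul_assoc, ← Matrix.mul_assoc, hW']
        simp only [Matrix.mul_add, Matrix.add_mul, Matrix.mul_assoc]
    _ = 0 := by rw [show Dᴴ * G + G * D = 0 from h, Matrix.mul_zero, Matrix.zero_mul]

lemma star_add_mul_eq_zero (h : IsSkewAdjointWrt G D) {x y : ι → ℂ} {μ ν : ℂ}
    (hx : D *ᵥ x = μ • x) (hy : D *ᵥ y = ν • y) :
    (star μ + ν) * (star x ⬝ᵥ G *ᵥ y) = 0 := by
  have hDG : Dᴴ * G = -(G * D) := eq_neg_of_add_eq_zero_left h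
  have key : star (D *ᵥ x) ⬝ᵥ G *ᵥ y = -(star x ⬝ᵥ G *ᵥ (D *ᵥ y)) := by
    rw [star_mulVec, ← dotProduct_mulVec, mulVec_mulVec, hDG, neg_mulVec, ← mulVec_mulVec,
      dotProduct_neg]
  rw [hx, hy] at key
  simp only [star_smul, smul_dotProduct, mulVec_smul, dotProduct_smul, smul_eq_mul] at key
  linear_combination key

lemma dotProduct_mulVec_eq_zero (h : IsSkewAdjointWrt G D) {x y : ι → ℂ} {μ ν : ℂ}
    (hx : D *ᵥ x = μ • x) (hy : D *ᵥ y = ν • y) (hμν : star μ + ν ≠ 0) :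
    star x ⬝ᵥ G *ᵥ y = 0 :=
  (mul_eq_zero.mp (h.star_add_mul_eq_zero hx hy)).resolve_left hμν

lemma eq_neg_star_of_dotProduct_mulVec_ne_zero (h : IsSkewAdjointWrt G D) {x y : ι → ℂ}
    {μ ν : ℂ} (hx : D *ᵥ x = μ • x) (hy : D *ᵥ y = ν • y) (hxy : star x ⬝ᵥ G *ᵥ y ≠ 0) :
    ν = -star μ :=
  eq_neg_of_add_eq_zero_right <| (mul_eq_zero.mp (h.star_add_mul_eq_zero hx hy)).resolve_right hxy

lemma dotProduct_mulVec_self_eq_zero (h : IsSkewAdjointWrt G D) {x : ι → ℂ} {μ : ℂ}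
    (hx : D *ᵥ x = μ • x) (hμ : μ.re ≠ 0) : star x ⬝ᵥ G *ᵥ x = 0 :=
  h.dotProduct_mulVec_eq_zero hx hx fun h0 => hμ (by simpa [Complex.ext_iff] using h0)

end IsSkewAdjointWrt

end SkewAdjoint

section HyperbolicPair

variable {ι κ : Type*} [Fintype ι] [Fintype κ]

structure IsHyperbolicPair (G : Matrix ι ι ℂ) (u w : ι → ℂ) : Prop where
  left_self : star u ⬝ᵥ G *ᵥ u = 0
  right_self : star w ⬝ᵥ G *ᵥ w = 0
  left_right : star u ⬝ᵥ G *ᵥ w = 1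

def pairProj (G : Matrix ι ι ℂ) (u w z : ι → ℂ) : ι → ℂ :=
  z - (star w ⬝ᵥ G *ᵥ z) • u - (star u ⬝ᵥ G *ᵥ z) • w

variable {G : Matrix ι ι ℂ} {u w : ι → ℂ}

namespace IsHyperbolicPair

lemma dotProduct_mulVec_pairProj_left (hp : IsHyperbolicPair G u w) (z : ι → ℂ) :
    star u ⬝ᵥ G *ᵥ pairProj G u w z = 0 := by
  simp [pairProj, mulVec_sub, mulVec_smul, hp.left_self, hp.left_right]

lemma dotProduct_mulVec_pairProj_right (hG : Gᴴ = G) (hp : IsHyperbolicPair G u w)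
    (z : ι → ℂ) : star w ⬝ᵥ G *ᵥ pairProj G u w z = 0 := by
  have hwu : star w ⬝ᵥ G *ᵥ u = 1 := by
    rw [star_dotProduct_mulVec_swap hG, hp.left_right, star_one]
  simp [pairProj, mulVec_sub, mulVec_smul, hp.right_self, hwu]

end IsHyperbolicPair

lemma IsSkewAdjointWrt.mulVec_pairProj {D : Matrix ι ι ℂ} (h : IsSkewAdjointWrt G D)
    {μ ν ρ : ℂ} (hu : D *ᵥ u = μ • u) (hw : D *ᵥ w = ν • w) (huw : star u ⬝ᵥ G *ᵥ w = 1)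
    {z : ι → ℂ} (hz : D *ᵥ z = ρ • z) : D *ᵥ pairProj G u w z = ρ • pairProj G u w z := by
  have hν : ν = -star μ := h.eq_neg_star_of_dotProduct_mulVec_ne_zero hu hw (by simp [huw])
  -- a nonzero coefficient forces `ρ` to be the eigenvalue of the vector it multiplies
  have hα : (star w ⬝ᵥ G *ᵥ z) * μ = (star w ⬝ᵥ G *ᵥ z) * ρ := by
    by_cases hwz : star w ⬝ᵥ G *ᵥ z = 0
    · simp [hwz]
    · rw [h.eq_neg_star_of_dotProduct_mulVec_ne_zero hw hz hwz, hν, star_neg, star_star, neg_neg]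
  have hβ : (star u ⬝ᵥ G *ᵥ z) * ν = (star u ⬝ᵥ G *ᵥ z) * ρ := by
    by_cases huz : star u ⬝ᵥ G *ᵥ z = 0
    · simp [huz]
    · rw [h.eq_neg_star_of_dotProduct_mulVec_ne_zero hu hz huz, hν]
  simp only [pairProj, mulVec_sub, mulVec_smul, hu, hw, hz, smul_sub, smul_smul, hα, hβ,
    mul_comm ρ]

lemma dotProduct_mulVec_mulVec_eq_zero {W : Matrix ι κ ℂ}
    (h : ∀ k, star u ⬝ᵥ G *ᵥ W.col k = 0) (x : κ → ℂ) : star u ⬝ᵥ G *ᵥ (W *ᵥ x) = 0 := by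
  rw [mulVec_mulVec, dotProduct_mulVec]
  convert zero_dotProduct x
  funext k
  exact h k

end HyperbolicPair

section Frame

variable {ι κ : Type*} [Fintype ι] [Fintype κ]

structure IsHyperbolicEigenframe (G D : Matrix ι ι ℂ) {m : ℕ} (e f : Fin m → ι → ℂ) : Prop where
  eigen_left : ∀ a, ∃ μ : ℂ, D *ᵥ e a = μ • e a
  eigen_right : ∀ a, ∃ μ : ℂ, D *ᵥ f a = μ • f a
  left_left : ∀ a b, star (e a) ⬝ᵥ G *ᵥ e b = 0
  right_right : ∀ a b, star (f a) ⬝ᵥ G *ᵥ f b = 0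
  left_right : ∀ a b, star (e a) ⬝ᵥ G *ᵥ f b = if a = b then 1 else 0

namespace IsHyperbolicEigenframe

variable {G D : Matrix ι ι ℂ} {m : ℕ}

lemma mulVec {D' : Matrix κ κ ℂ} {W : Matrix ι κ ℂ} {e f : Fin m → κ → ℂ}
    (h : IsHyperbolicEigenframe (Wᴴ * G * W) D' e f) (hW : D * W = W * D') :
    IsHyperbolicEigenframe G D (fun a => W *ᵥ e a) (fun a => W *ᵥ f a) := by
  have eigen {x : κ → ℂ} {μ : ℂ} (hx : D' *ᵥ x = μ • x) : D *ᵥ (W *ᵥ x) = μ • (W *ᵥ x) := by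
    rw [mulVec_mulVec, hW, ← mulVec_mulVec, hx, mulVec_smul]
  refine ⟨fun a => ?_, fun a => ?_, ?_, ?_, ?_⟩
  · obtain ⟨μ, hμ⟩ := h.eigen_left a
    exact ⟨μ, eigen hμ⟩
  · obtain ⟨μ, hμ⟩ := h.eigen_right a
    exact ⟨μ, eigen hμ⟩
  all_goals intro a b; rw [star_mulVec_dotProduct_mulVec]
  exacts [h.left_left a b, h.right_right a b, h.left_right a b]

lemma cons (hG : Gᴴ = G) {e f : Fin m → ι → ℂ} (h : IsHyperbolicEigenframe G D e f)
    {u w : ι → ℂ} {μ ν : ℂ} (hu : D *ᵥ u = μ • u) (hw : D *ᵥ w = ν • w)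
    (hp : IsHyperbolicPair G u w)
    (hue : ∀ a, star u ⬝ᵥ G *ᵥ e a = 0) (huf : ∀ a, star u ⬝ᵥ G *ᵥ f a = 0)
    (hwe : ∀ a, star w ⬝ᵥ G *ᵥ e a = 0) (hwf : ∀ a, star w ⬝ᵥ G *ᵥ f a = 0) :
    IsHyperbolicEigenframe G D (Fin.cons u e : Fin (m + 1) → ι → ℂ) (Fin.cons w f) := by
  have swap {x y : ι → ℂ} (hxy : star x ⬝ᵥ G *ᵥ y = 0) : star y ⬝ᵥ G *ᵥ x = 0 := by
    rw [star_dotProduct_mulVec_swap hG, hxy, star_zero]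
  refine ⟨fun a => ?_, fun a => ?_, fun a b => ?_, fun a b => ?_, fun a b => ?_⟩
  · cases a using Fin.cases
    exacts [⟨μ, hu⟩, h.eigen_left _]
  · cases a using Fin.cases
    exacts [⟨ν, hw⟩, h.eigen_right _]
  all_goals cases a using Fin.cases <;> cases b using Fin.cases <;>
    simp [hp.left_self, hp.right_self, hp.left_right, hue, huf, hwf, swap (hue _), swap (hwe _),
      swap (hwf _), h.left_left, h.right_right, h.left_right,
      fun i : Fin m => (Fin.succ_ne_zero i).symm]

end IsHyperbolicEigenframe

end Frame

section Reduction

variable {ι : Type*} [Fintype ι] [DecidableEq ι]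

lemma diagonal_mulVec_single_one (d : ι → ℂ) (i : ι) :
    diagonal d *ᵥ Pi.single i 1 = d i • Pi.single i 1 := by
  ext l
  simp [Pi.single_apply]

lemma isHyperbolicPair_single {G : Matrix ι ι ℂ} {i j : ι} (hii : G i i = 0) (hjj : G j j = 0)
    (hij : G i j ≠ 0) : IsHyperbolicPair G (Pi.single i 1) ((G i j)⁻¹ • Pi.single j 1) where
  left_self := by simpa using hii
  right_self := by simp [mulVec_smul, hjj]
  left_right := by simp [mulVec_smul, hij]

-- The columns, indexed by the coordinates other than `i` and `j`, span the `G`-orthogonal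
-- complement of the hyperbolic pair `(eᵢ, (G i j)⁻¹ eⱼ)`.
noncomputable def pairComplBasis (G : Matrix ι ι ℂ) (i j : ι) :
    Matrix ι {k // k ∉ ({i, j} : Finset ι)} ℂ :=
  of fun l k => pairProj G (Pi.single i 1) ((G i j)⁻¹ • Pi.single j 1) (Pi.single k.1 1) l

variable {G : Matrix ι ι ℂ} {i j : ι}

lemma col_pairComplBasis (k : {k // k ∉ ({i, j} : Finset ι)}) :
    (pairComplBasis G i j).col k =
      pairProj G (Pi.single i 1) ((G i j)⁻¹ • Pi.single j 1) (Pi.single k.1 1) :=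
  rfl

lemma pairComplBasis_mulVec_apply (x : {k // k ∉ ({i, j} : Finset ι)} → ℂ)
    (k : {k // k ∉ ({i, j} : Finset ι)}) : (pairComplBasis G i j *ᵥ x) k = x k := by
  have hki : k.1 ≠ i := fun h => k.2 (by simp [h])
  have hkj : k.1 ≠ j := fun h => k.2 (by simp [h])
  simp [pairComplBasis, pairProj, mulVec, dotProduct, Pi.single_apply, hki, hkj,
    ← Subtype.ext_iff]

lemma det_conjTranspose_mul_mul_pairComplBasis_ne_zero (hG : Gᴴ = G) (hdet : G.det ≠ 0)
    (hii : G i i = 0) (hjj : G j j = 0) (hij : G i j ≠ 0) :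
    ((pairComplBasis G i j)ᴴ * G * pairComplBasis G i j).det ≠ 0 := by
  set W := pairComplBasis G i j
  set u : ι → ℂ := Pi.single i 1
  set w : ι → ℂ := (G i j)⁻¹ • Pi.single j 1
  have hp : IsHyperbolicPair G u w := isHyperbolicPair_single hii hjj hij
  rw [Ne, ← exists_mulVec_eq_zero_iff]
  rintro ⟨x, hx0, hx⟩
  -- `W x` is orthogonal to `u`, `w` and the columns of `W`, which together span everything.
  have hu (y) : star u ⬝ᵥ G *ᵥ (W *ᵥ y) = 0 :=
    dotProduct_mulVec_mulVec_eq_zero (fun _ => hp.dotProduct_mulVec_pairProj_left _) y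
  have hw (y) : star w ⬝ᵥ G *ᵥ (W *ᵥ y) = 0 :=
    dotProduct_mulVec_mulVec_eq_zero (fun _ => hp.dotProduct_mulVec_pairProj_right hG _) y
  have hWW (k) : star (W.col k) ⬝ᵥ G *ᵥ (W *ᵥ x) = 0 := by
    rw [← mulVec_single_one, star_mulVec_dotProduct_mulVec, hx, dotProduct_zero]
  have hGWx : G *ᵥ (W *ᵥ x) = 0 := by
    funext l
    suffices star (Pi.single l 1) ⬝ᵥ G *ᵥ (W *ᵥ x) = 0 by simpa using this
    by_cases hli : l = i
    · rw [hli]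
      exact hu x
    by_cases hlj : l = j
    · have : Pi.single l 1 = G i j • w := by rw [hlj, smul_smul, mul_inv_cancel₀ hij, one_smul]
      rw [this, star_smul, smul_dotProduct, hw, smul_zero]
    have hl : l ∉ ({i, j} : Finset ι) := by simp [hli, hlj]
    have : Pi.single l 1 = W.col ⟨l, hl⟩ + (star w ⬝ᵥ G *ᵥ Pi.single l 1) • u +
        (star u ⬝ᵥ G *ᵥ Pi.single l 1) • w := by
      rw [col_pairComplBasis, pairProj]
      abel
    rw [this]
    simp only [star_add, star_smul, add_dotProduct, smul_dotProduct, hWW, hu, hw, smul_zero,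
      add_zero]
  have hWx : W *ᵥ x = 0 := by
    by_contra hWx
    exact hdet (exists_mulVec_eq_zero_iff.mp ⟨_, hWx, hGWx⟩)
  exact hx0 (funext fun k => by rw [← pairComplBasis_mulVec_apply x k, hWx, Pi.zero_apply]; rfl)

end Reduction

theorem exists_isHyperbolicEigenframe (m : ℕ) {ι : Type*} [Fintype ι] [DecidableEq ι]
    (G : Matrix ι ι ℂ) (d : ι → ℂ) (hcard : Fintype.card ι = 2 * m) (hG : Gᴴ = G)
    (hdet : G.det ≠ 0) (hskew : IsSkewAdjointWrt G (diagonal d)) (hd : ∀ i, (d i).re ≠ 0) :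
    ∃ e f : Fin m → ι → ℂ, IsHyperbolicEigenframe G (diagonal d) e f := by
  induction m generalizing ι with
  | zero =>
    exact ⟨Fin.elim0, Fin.elim0, ⟨nofun, nofun, nofun, nofun, nofun⟩⟩
  | succ m ih =>
    have hGdiag (i : ι) : G i i = 0 := by
      simpa using hskew.dotProduct_mulVec_self_eq_zero (diagonal_mulVec_single_one d i) (hd i)
    obtain ⟨i⟩ : Nonempty ι := Fintype.card_pos_iff.mp (by omega)
    obtain ⟨j, hij⟩ : ∃ j, G i j ≠ 0 :=
      not_forall.mp fun h => hdet (det_eq_zero_of_row_eq_zero i h)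
    have hp := isHyperbolicPair_single (hGdiag i) (hGdiag j) hij
    have hu := diagonal_mulVec_single_one d i
    have hw : diagonal d *ᵥ ((G i j)⁻¹ • Pi.single j 1) = d j • ((G i j)⁻¹ • Pi.single j 1) := by
      rw [mulVec_smul, diagonal_mulVec_single_one, smul_comm]
    set W := pairComplBasis G i j
    have hDW : diagonal d * W = W * diagonal fun k => d k.1 :=
      mul_eq_mul_diagonal_of_col fun k =>
        hskew.mulVec_pairProj hu hw hp.left_right (diagonal_mulVec_single_one d k.1)
    have hcard' : Fintype.card {k // k ∉ ({i, j} : Finset ι)} = 2 * m := by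
      rw [Fintype.card_subtype_compl, Fintype.card_coe,
        Finset.card_pair fun h => hij (by rw [← h, hGdiag])]
      omega
    obtain ⟨e, f, hef⟩ := ih (Wᴴ * G * W) (fun k => d k.1) hcard'
      (by simp only [conjTranspose_mul, conjTranspose_conjTranspose, hG, Matrix.mul_assoc])
      (det_conjTranspose_mul_mul_pairComplBasis_ne_zero hG hdet (hGdiag i) (hGdiag j) hij)
      (hskew.congr hDW) fun k => hd k.1
    have hWu := dotProduct_mulVec_mulVec_eq_zero (W := W) fun _ =>
      hp.dotProduct_mulVec_pairProj_left _
    have hWw := dotProduct_mulVec_mulVec_eq_zero (W := W) fun _ =>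
      hp.dotProduct_mulVec_pairProj_right hG _
    exact ⟨_, _, (hef.mulVec hDW).cons hG hu hw hp (fun _ => hWu _) (fun _ => hWu _)
      (fun _ => hWw _) (fun _ => hWw _)⟩

section FrameMatrix

variable {ι : Type*} {m : ℕ}

-- `f` is listed in reverse so that the Gram matrix is `R2 m` rather than `fromBlocks 0 1 1 0`.
def frameMatrix (e f : Fin m → ι → ℂ) : Matrix ι (Fin m ⊕ Fin m) ℂ :=
  of fun i k => Sum.elim e (fun b => f b.rev) k i

variable {e f : Fin m → ι → ℂ}

lemma col_frameMatrix_inl (a : Fin m) : (frameMatrix e f).col (.inl a) = e a := rfl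

lemma col_frameMatrix_inr (b : Fin m) : (frameMatrix e f).col (.inr b) = f b.rev := rfl

variable [Fintype ι] {G D : Matrix ι ι ℂ}

lemma IsHyperbolicEigenframe.conjTranspose_mul_mul_frameMatrix (hG : Gᴴ = G)
    (h : IsHyperbolicEigenframe G D e f) : (frameMatrix e f)ᴴ * G * frameMatrix e f = R2 m := by
  ext (a | a) (b | b) <;>
    simp only [conjTranspose_mul_mul_apply, col_frameMatrix_inl, col_frameMatrix_inr]
  · simpa [R2] using h.left_left a b
  · simpa [R2_inl_inr] using h.left_right a b.rev
  · rw [star_dotProduct_mulVec_swap hG, h.left_right, R2_inr_inl]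
    simp only [eq_comm (a := b), Fin.rev_eq_iff]
    split_ifs <;> simp
  · simpa [R2] using h.right_right a.rev b.rev

lemma IsHyperbolicEigenframe.exists_mul_frameMatrix (h : IsHyperbolicEigenframe G D e f) :
    ∃ d', D * frameMatrix e f = frameMatrix e f * diagonal d' := by
  choose μ hμ using h.eigen_left
  choose ν hν using h.eigen_right
  exact ⟨Sum.elim μ fun b => ν b.rev,
    mul_eq_mul_diagonal_of_col fun | .inl a => hμ a | .inr b => hν b.rev⟩

end FrameMatrix

lemma isSkewAdjointWrt_R2 {n : ℕ} {A : Matrix (Fin n ⊕ Fin n) (Fin n ⊕ Fin n) ℂ}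
    (h : R2 n * Aᴴ * R2 n = -A) : IsSkewAdjointWrt (R2 n) A := by
  have : Aᴴ * R2 n = R2 n * (R2 n * Aᴴ * R2 n) := by
    rw [← Matrix.mul_assoc, ← Matrix.mul_assoc, R2_mul_self, Matrix.one_mul]
  rw [IsSkewAdjointWrt, this, h, Matrix.mul_neg, neg_add_cancel]

section Similarity

variable {ι : Type*} [Fintype ι] [DecidableEq ι] {A Q : Matrix ι ι ℂ}

lemma mem_spectrum_of_inv_mul_mul_eq_diagonal (hQ : IsUnit Q.det) {d : ι → ℂ}
    (h : Q⁻¹ * A * Q = diagonal d) (i : ι) : d i ∈ spectrum ℂ A := by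
  rw [← spectrum.units_conjugate' (u := nonsingInvUnit Q hQ), coe_units_inv]
  change d i ∈ spectrum ℂ (Q⁻¹ * A * Q)
  rw [h, spectrum_diagonal]
  exact Set.mem_range_self i

lemma isUnit_det_of_conjTranspose_mul_mul_eq {G G' : Matrix ι ι ℂ} (h : Qᴴ * G * Q = G')
    (hG' : G'.det ≠ 0) : IsUnit Q.det :=
  isUnit_iff_ne_zero.mpr fun h0 => hG' (by rw [← h, det_mul, h0, mul_zero])

lemma isDiag_inv_mul_mul_of_mul_eq (hQ : IsUnit Q.det) {d : ι → ℂ}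
    (h : A * Q = Q * diagonal d) : (Q⁻¹ * A * Q).IsDiag := by
  rw [Matrix.mul_assoc, h, ← Matrix.mul_assoc, nonsing_inv_mul _ hQ, Matrix.one_mul]
  exact isDiag_diagonal d

end Similarity

theorem stmt8 (n : ℕ) (A : Matrix (Fin n ⊕ Fin n) (Fin n ⊕ Fin n) ℂ)
    (hstruct : R2 n * Aᴴ * R2 n = -A)
    (hdiag : ∃ Q : Matrix (Fin n ⊕ Fin n) (Fin n ⊕ Fin n) ℂ,
      IsUnit Q.det ∧ (Q⁻¹ * A * Q).IsDiag)
    (hspec : ∀ μ ∈ spectrum ℂ A, μ.re ≠ 0) :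
    ∃ P : Matrix (Fin n ⊕ Fin n) (Fin n ⊕ Fin n) ℂ,
      Pᴴ * R2 n * P = R2 n ∧ (P⁻¹ * A * P).IsDiag := by
  obtain ⟨Q, hQ, hQA⟩ := hdiag
  set d := (Q⁻¹ * A * Q).diag
  have hQd : Q⁻¹ * A * Q = diagonal d := hQA.diagonal_diag.symm
  have hAQ : A * Q = Q * diagonal d := by
    rw [← hQd, ← Matrix.mul_assoc, ← Matrix.mul_assoc, mul_nonsing_inv _ hQ, Matrix.one_mul]
  set G := Qᴴ * R2 n * Q
  have hG : Gᴴ = G := by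
    simp only [G, conjTranspose_mul, conjTranspose_conjTranspose, conjTranspose_R2,
      Matrix.mul_assoc]
  have hGdet : G.det ≠ 0 := by
    simp [G, det_mul, hQ.ne_zero, det_R2_ne_zero]
  obtain ⟨e, f, hef⟩ := exists_isHyperbolicEigenframe n G d (by simp; ring) hG hGdet
    ((isSkewAdjointWrt_R2 hstruct).congr hAQ)
    fun i => hspec _ (mem_spectrum_of_inv_mul_mul_eq_diagonal hQ hQd i)
  obtain ⟨d', hd'⟩ := hef.exists_mul_frameMatrix
  have hPR : (Q * frameMatrix e f)ᴴ * R2 n * (Q * frameMatrix e f) = R2 n := by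
    calc _ = (frameMatrix e f)ᴴ * G * frameMatrix e f := by
          simp only [G, conjTranspose_mul, Matrix.mul_assoc]
      _ = R2 n := hef.conjTranspose_mul_mul_frameMatrix hG
  refine ⟨_, hPR, isDiag_inv_mul_mul_of_mul_eq (d := d')
    (isUnit_det_of_conjTranspose_mul_mul_eq hPR (det_R2_ne_zero n)) ?_⟩
  rw [← Matrix.mul_assoc, hAQ, Matrix.mul_assoc, hd']
  exact (Matrix.mul_assoc _ _ _).symm
end

section
/- A matrix Q ∈ M_{2n}(ℂ) is both unitary and symplectic if and only if Q = [V J_{2n}ᵀV] (block columns) for some V ∈ M_{2n×n}(ℂ) with VᴴV = I_n and VᴴJ_{2n}V = 0. -/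
open Matrix

/-! A unitary `Q` is symplectic iff it commutes with `J`. Writing `Q = [V W]`, the identity
`Q J = [-W V]` turns `J Q = Q J` into `W = -J V = Jᵀ V`, and for such `Q` the Gram matrix `Qᴴ Q`
has blocks `VᴴV` on the diagonal and `∓ VᴴJV` off it, so `Q` is unitary iff `VᴴV = 1` and
`VᴴJV = 0`. -/

theorem Matrix.conjTranspose_mul_mul_eq_self_iff_commute {m R : Type*} [Fintype m]
    [DecidableEq m] [CommRing R] [StarRing R] {Q A : Matrix m m R} (hQ : Qᴴ * Q = 1) :
    Qᴴ * A * Q = A ↔ A * Q = Q * A := by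
  have hQ' : Q * Qᴴ = 1 := mul_eq_one_comm.mp hQ
  constructor
  · intro h
    calc A * Q = Q * (Qᴴ * A * Q) := by simp only [← Matrix.mul_assoc, hQ', Matrix.one_mul]
      _ = Q * A := by rw [h]
  · intro h
    rw [Matrix.mul_assoc, h, ← Matrix.mul_assoc, hQ, Matrix.one_mul]

namespace Jmat

variable {n : ℕ} {m : Type*}

theorem transpose : (Jmat n)ᵀ = -Jmat n := by
  simp [Jmat, fromBlocks_transpose, fromBlocks_neg]

theorem conjTranspose : (Jmat n)ᴴ = -Jmat n := by
  simp [Jmat, fromBlocks_conjTranspose, fromBlocks_neg]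

theorem mul_self : Jmat n * Jmat n = -1 := by
  simp [Jmat, fromBlocks_multiply, ← fromBlocks_one, fromBlocks_neg]

theorem mul_mul_self (V : Matrix (Fin n ⊕ Fin n) m ℂ) : Jmat n * (Jmat n * V) = -V := by
  rw [← Matrix.mul_assoc, mul_self, Matrix.neg_mul, Matrix.one_mul]

theorem fromCols_mul (V W : Matrix m (Fin n) ℂ) :
    fromCols V W * Jmat n = fromCols (-W) V := by
  simp [Jmat, fromCols_mul_fromBlocks]

theorem commute_fromCols_iff (V W : Matrix (Fin n ⊕ Fin n) (Fin n) ℂ) :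
    Jmat n * fromCols V W = fromCols V W * Jmat n ↔ W = (Jmat n)ᵀ * V := by
  rw [mul_fromCols, fromCols_mul, fromCols_ext_iff, transpose, Matrix.neg_mul]
  constructor
  · rintro ⟨hV, -⟩
    rw [hV, neg_neg]
  · rintro rfl
    simp only [Matrix.mul_neg, mul_mul_self, neg_neg, and_self]

theorem gram_fromCols_transpose_mul (V : Matrix (Fin n ⊕ Fin n) m ℂ) :
    (fromCols V ((Jmat n)ᵀ * V))ᴴ * fromCols V ((Jmat n)ᵀ * V) =
      fromBlocks (Vᴴ * V) (-(Vᴴ * Jmat n * V)) (Vᴴ * Jmat n * V) (Vᴴ * V) := by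
  simp only [conjTranspose_fromCols_eq_fromRows_conjTranspose, fromRows_mul_fromCols,
    transpose, conjTranspose_mul, conjTranspose_neg, conjTranspose, Matrix.neg_mul,
    Matrix.mul_neg, neg_neg, Matrix.mul_assoc, mul_mul_self]

theorem unitary_fromCols_iff [DecidableEq m] (V : Matrix (Fin n ⊕ Fin n) m ℂ) :
    (fromCols V ((Jmat n)ᵀ * V))ᴴ * fromCols V ((Jmat n)ᵀ * V) = 1 ↔
      Vᴴ * V = 1 ∧ Vᴴ * Jmat n * V = 0 := by
  rw [gram_fromCols_transpose_mul, ← fromBlocks_one, fromBlocks_inj, neg_eq_zero]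
  tauto

end Jmat

theorem stmt13 (n : ℕ) (Q : Matrix (Fin n ⊕ Fin n) (Fin n ⊕ Fin n) ℂ) :
    (Qᴴ * Q = 1 ∧ Qᴴ * Jmat n * Q = Jmat n) ↔
    ∃ V : Matrix (Fin n ⊕ Fin n) (Fin n) ℂ,
      Vᴴ * V = 1 ∧ Vᴴ * Jmat n * V = 0 ∧
      Q = Matrix.fromCols V ((Jmat n)ᵀ * V) := by
  rw [and_congr_right conjTranspose_mul_mul_eq_self_iff_commute]
  constructor
  · rintro ⟨hU, hJ⟩
    rw [← fromCols_toCols Q] at hU hJ ⊢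
    rw [Jmat.commute_fromCols_iff] at hJ
    rw [hJ, Jmat.unitary_fromCols_iff] at hU
    exact ⟨Q.toCols₁, hU.1, hU.2, by rw [hJ]⟩
  · rintro ⟨V, hV, hJV, rfl⟩
    exact ⟨(Jmat.unitary_fromCols_iff V).2 ⟨hV, hJV⟩, (Jmat.commute_fromCols_iff _ _).2 rfl⟩
end
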